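/- For a propositional formula φ and atoms p₁,...,pₙ listing sig(φ) \ σ, the QBF χ = ∃p₁⋯∃pₙ.φ satisfies: φ ⊨ χ, sig(χ) ⊆ σ, and for every propositional formula ψ with φ ⊨ ψ and sig(ψ) ∩ sig(φ) ⊆ σ, one has χ ⊨ ψ. -/

import Mathlib

inductive PropForm : Type where
  | var : ℕ → PropForm
  | tru : PropForm
  | fls : PropForm
  | neg : PropForm → PropForm
  | conj : PropForm → PropForm → PropForm
  | disj : PropForm → PropForm → PropForm
deriving DecidableEq

namespace PropForm

def eval (v : ℕ → Bool) : PropForm → Bool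
  | var p => v p
  | tru => true
  | fls => false
  | neg φ => !(eval v φ)
  | conj φ ψ => eval v φ && eval v ψ
  | disj φ ψ => eval v φ || eval v ψ

def sig : PropForm → Finset ℕ
  | var p => {p}
  | tru => ∅
  | fls => ∅
  | neg φ => sig φ
  | conj φ ψ => sig φ ∪ sig ψ
  | disj φ ψ => sig φ ∪ sig ψ

def impl (φ ψ : PropForm) : PropForm := disj (neg φ) ψ

def iff (φ ψ : PropForm) : PropForm := conj (impl φ ψ) (impl ψ φ)

end PropForm

/-- Semantic entailment: every model of `φ` is a model of `ψ`. -/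
def Entails (φ ψ : PropForm) : Prop :=
  ∀ v : ℕ → Bool, φ.eval v = true → ψ.eval v = true

/-- `satExistsF ps f v` holds iff `v ⊨ ∃ p₁ ⋯ ∃ pₙ. f` where `ps = [p₁,…,pₙ]`:
some valuation agreeing with `v` except possibly on the `pᵢ` satisfies `f`. -/
def satExistsF : List ℕ → ((ℕ → Bool) → Bool) → (ℕ → Bool) → Prop
  | [], f, v => f v = true
  | p :: ps, f, v => ∃ b : Bool, satExistsF ps f (Function.update v p b)

theorem PropForm.eval_congr {v w : ℕ → Bool} :
    ∀ φ : PropForm, (∀ q ∈ φ.sig, v q = w q) → φ.eval v = φ.eval w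
  | var p, h => h p (Finset.mem_singleton_self p)
  | tru, _ | fls, _ => rfl
  | neg φ, h => congrArg (!·) (eval_congr φ h)
  | conj φ ψ, h | disj φ ψ, h => by
      simp only [sig, Finset.mem_union] at h
      simp only [eval, eval_congr φ fun q hq => h q (.inl hq),
        eval_congr ψ fun q hq => h q (.inr hq)]

theorem satExistsF_of_eq_true {f : (ℕ → Bool) → Bool} {v : ℕ → Bool} (h : f v = true) :
    ∀ ps : List ℕ, satExistsF ps f v
  | [] => h
  | p :: ps => ⟨v p, by rw [Function.update_eq_self]; exact satExistsF_of_eq_true h ps⟩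

theorem exists_eq_off_of_satExistsF {f : (ℕ → Bool) → Bool} :
    ∀ {ps : List ℕ} {v : ℕ → Bool}, satExistsF ps f v →
      ∃ w : ℕ → Bool, (∀ q ∉ ps, w q = v q) ∧ f w = true
  | [], v, h => ⟨v, fun _ _ => rfl, h⟩
  | p :: ps, v, ⟨b, hb⟩ => by
    obtain ⟨w, hw, hfw⟩ := exists_eq_off_of_satExistsF hb
    refine ⟨w, fun q hq => ?_, hfw⟩
    rw [List.mem_cons, not_or] at hq
    rw [hw q hq.2, Function.update_of_ne hq.1]

theorem Entails.eval_of_satExistsF {φ ψ : PropForm} (hent : Entails φ ψ) {ps : List ℕ}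
    (hdisj : ∀ q ∈ ψ.sig, q ∉ ps) {v : ℕ → Bool} (hv : satExistsF ps φ.eval v) :
    ψ.eval v = true := by
  obtain ⟨w, hwv, hw⟩ := exists_eq_off_of_satExistsF hv
  rw [← hent w hw]
  exact ψ.eval_congr fun q hq => (hwv q (hdisj q hq)).symm

theorem exists_closure_uniform_interpolant_general (φ : PropForm) (σ : Finset ℕ)
    (ps : List ℕ) (hps : ps.toFinset = φ.sig \ σ) :
    (∀ v : ℕ → Bool, φ.eval v = true → satExistsF ps φ.eval v) ∧
    (φ.sig \ ps.toFinset ⊆ σ) ∧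
    (∀ ψ : PropForm, Entails φ ψ → ψ.sig ∩ φ.sig ⊆ σ →
      ∀ v : ℕ → Bool, satExistsF ps φ.eval v → ψ.eval v = true) := by
  refine ⟨fun v hv => satExistsF_of_eq_true hv ps, ?_, ?_⟩
  · rw [hps, Finset.sdiff_sdiff_self_left]
    exact Finset.inter_subset_right
  · intro ψ hent hsig v hv
    refine hent.eval_of_satExistsF (fun q hq hqps => ?_) hv
    have hq' : q ∈ φ.sig \ σ := hps ▸ List.mem_toFinset.mpr hqps
    rw [Finset.mem_sdiff] at hq'
    exact hq'.2 (hsig (Finset.mem_inter_of_mem hq hq'.1))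

/-- The existential closure `∃ p₁ ⋯ ∃ pₙ. φ` over the atoms `sig(φ) \ σ` is a
(QBF-level) uniform `σ`-interpolant for `φ`. -/
theorem exists_closure_uniform_interpolant (φ : PropForm) (σ : Finset ℕ)
    (hσ : σ ⊆ φ.sig) (ps : List ℕ) (hps : ps.toFinset = φ.sig \ σ) :
    (∀ v : ℕ → Bool, φ.eval v = true → satExistsF ps φ.eval v) ∧
    (φ.sig \ ps.toFinset ⊆ σ) ∧
    (∀ ψ : PropForm, Entails φ ψ → ψ.sig ∩ φ.sig ⊆ σ →
      ∀ v : ℕ → Bool, satExistsF ps φ.eval v → ψ.eval v = true) :=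
  exists_closure_uniform_interpolant_general φ σ ps hps
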